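/- arXiv:1005.5048 — 4 statements merged into one kernel-verified Lean document; each statement's English description precedes it below -/
import Mathlib

section
/- Let f, g be real analytic in a neighborhood of 0 ∈ ℝ with g(0) = 0, g'(0) = 1, and x·g(x) > 0 for x ≠ 0 near 0. Define F(x) = ∫₀ˣ f(s) ds, q(x) = ∫₀ˣ e^{F(s)} ds, and p(x, v) = v·e^{F(x)}. If g'(x) + f(x)·g(x) = 1 for all x in a neighborhood of 0, then along any solution (x(t), y(t)) of the Liénard-type system ẋ = y, ẏ = −g(x) − f(x)y² near the origin, the transformed variables Q(t) = q(x(t)), P(t) = p(x(t), y(t)) satisfy the linear system Q̇ = P, Ṗ = −Q. -/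
/-!
Integrals based at `0` only make sense once `[0, x t]` lies where `f` and `g` are regular, so
first take a base point `c = x t₀` on the trajectory, which stays in an interval `V` of
regularity. Put `A = g c + q_c(x)` and `B = y e^{F_c(x)}`. The chain rule gives `A' = B` and
`B' = -g(x) e^{F_c(x)}`, and the condition `g' + f g = 1` says exactly that
`(g e^{F_c} - q_c)' = 0`, so `g(x) e^{F_c(x)} = A` and `B' = -A`. A harmonic oscillator
`A'' = -A` satisfies `A(π) = -A(0)`, hence vanishes somewhere; there `g(x) = 0`, so `x = 0` by
`x g(x) > 0`. Rebasing at `c = 0`, where `g 0 = 0`, turns `A` into `Q` itself.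
-/

open Set Real intervalIntegral

theorem hasDerivAt_intervalIntegral_of_ordConnected {f : ℝ → ℝ} {V : Set ℝ} {c b : ℝ}
    (hVo : IsOpen V) (hVc : V.OrdConnected) (hf : ContinuousOn f V) (hc : c ∈ V) (hb : b ∈ V) :
    HasDerivAt (fun b => ∫ u in c..b, f u) (f b) b :=
  integral_hasDerivAt_right (hf.mono (hVc.uIcc_subset hc hb)).intervalIntegrable
    (hf.stronglyMeasurableAtFilter hVo b hb) (hf.continuousAt (hVo.mem_nhds hb))

theorem exists_eq_zero_of_hasDerivAt_neg {A B : ℝ → ℝ}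
    (hA : ∀ t, HasDerivAt A (B t) t) (hB : ∀ t, HasDerivAt B (-A t) t) :
    ∃ s, A s = 0 := by
  have hconst : ∀ t, HasDerivAt (fun t => A t * cos t - B t * sin t) 0 t := fun t =>
    (((hA t).mul (hasDerivAt_cos t)).sub ((hB t).mul (hasDerivAt_sin t))).congr_deriv (by ring)
  have hπ : A π = -A 0 := by
    have := is_const_of_deriv_eq_zero (fun t => (hconst t).differentiableAt)
      (fun t => (hconst t).deriv) π 0
    simp only [cos_pi, sin_pi, cos_zero, sin_zero] at this
    linarith
  have hcont : ContinuousOn A (uIcc 0 π) := fun t _ => (hA t).continuousAt.continuousWithinAt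
  have hzero : (0 : ℝ) ∈ uIcc (A 0) (A π) := by
    rw [hπ, mem_uIcc]
    rcases le_total (A 0) 0 with h | h
    · exact Or.inl ⟨h, by linarith⟩
    · exact Or.inr ⟨by linarith, h⟩
  obtain ⟨s, -, hs⟩ := intermediate_value_uIcc hcont hzero
  exact ⟨s, hs⟩

theorem exists_isOpen_ordConnected_of_isPreconnected {S U : Set ℝ} (hS : IsPreconnected S)
    (hSne : S.Nonempty) (hU : IsOpen U) (hSU : S ⊆ U) :
    ∃ V, IsOpen V ∧ V.OrdConnected ∧ S ⊆ V ∧ V ⊆ U := by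
  obtain ⟨a, ha⟩ := hSne
  exact ⟨connectedComponentIn U a, hU.connectedComponentIn,
    isPreconnected_connectedComponentIn.ordConnected, hS.subset_connectedComponentIn ha hSU,
    connectedComponentIn_subset U a⟩

namespace Lienard

variable {f g x y : ℝ → ℝ} {V : Set ℝ} {c : ℝ}

theorem hasDerivAt_integral_exp_integral {b : ℝ} (hVo : IsOpen V) (hVc : V.OrdConnected)
    (hf : ContinuousOn f V) (hc : c ∈ V) (hb : b ∈ V) :
    HasDerivAt (fun b => ∫ s in c..b, exp (∫ u in c..s, f u)) (exp (∫ u in c..b, f u)) b := by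
  refine hasDerivAt_intervalIntegral_of_ordConnected hVo hVc (fun a ha => ?_) hc hb
  exact (hasDerivAt_intervalIntegral_of_ordConnected hVo hVc hf hc ha).continuousAt.rexp
    |>.continuousWithinAt

theorem mul_exp_integral_eq {b : ℝ} (hVo : IsOpen V) (hVc : V.OrdConnected)
    (hf : ContinuousOn f V) (hg : ∀ a ∈ V, DifferentiableAt ℝ g a) (hc : c ∈ V) (hb : b ∈ V)
    (hiso : ∀ a ∈ uIcc c b, deriv g a + f a * g a = 1) :
    g b * exp (∫ u in c..b, f u) = g c + ∫ s in c..b, exp (∫ u in c..s, f u) := by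
  have hderiv : ∀ a ∈ uIcc c b, HasDerivAt
      (fun a => g a * exp (∫ u in c..a, f u) - ∫ s in c..a, exp (∫ u in c..s, f u)) 0 a := by
    intro a ha
    have haV := hVc.uIcc_subset hc hb ha
    refine (((hg a haV).hasDerivAt.mul
      (hasDerivAt_intervalIntegral_of_ordConnected hVo hVc hf hc haV).exp).sub
      (hasDerivAt_integral_exp_integral hVo hVc hf hc haV)).congr_deriv ?_
    linear_combination exp (∫ u in c..a, f u) * hiso a ha
  have := integral_eq_sub_of_hasDerivAt hderiv intervalIntegrable_const
  simp only [integral_zero, integral_same, exp_zero, mul_one, sub_zero] at this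
  linarith

theorem hasDerivAt_coordinates (hVo : IsOpen V) (hVc : V.OrdConnected)
    (hf : ContinuousOn f V) (hg : ∀ a ∈ V, DifferentiableAt ℝ g a) (hc : c ∈ V)
    (hxV : ∀ t, x t ∈ V) (hiso : ∀ t, ∀ a ∈ uIcc c (x t), deriv g a + f a * g a = 1)
    (hx : ∀ t, HasDerivAt x (y t) t)
    (hy : ∀ t, HasDerivAt y (-(g (x t)) - f (x t) * (y t) ^ 2) t) (t : ℝ) :
    HasDerivAt (fun t => g c + ∫ s in c..(x t), exp (∫ u in c..s, f u))
        (y t * exp (∫ u in c..(x t), f u)) t ∧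
      HasDerivAt (fun t => y t * exp (∫ u in c..(x t), f u))
        (-(g c + ∫ s in c..(x t), exp (∫ u in c..s, f u))) t := by
  have hF := (hasDerivAt_intervalIntegral_of_ordConnected hVo hVc hf hc (hxV t)).comp t (hx t)
  have hQ := (hasDerivAt_integral_exp_integral hVo hVc hf hc (hxV t)).comp t (hx t)
  refine ⟨by simpa [Function.comp_def, mul_comm] using hQ.const_add (g c), ?_⟩
  rw [← mul_exp_integral_eq hVo hVc hf hg hc (hxV t) (hiso t)]
  refine ((hy t).mul hF.exp).congr_deriv ?_
  simp only [Function.comp_def]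
  ring

theorem exists_apply_eq_zero (hVo : IsOpen V) (hVc : V.OrdConnected)
    (hf : ContinuousOn f V) (hg : ∀ a ∈ V, DifferentiableAt ℝ g a) (hxV : ∀ t, x t ∈ V)
    (hiso : ∀ t t', ∀ a ∈ uIcc (x t) (x t'), deriv g a + f a * g a = 1)
    (hx : ∀ t, HasDerivAt x (y t) t)
    (hy : ∀ t, HasDerivAt y (-(g (x t)) - f (x t) * (y t) ^ 2) t) :
    ∃ s, g (x s) = 0 := by
  have hcoord := hasDerivAt_coordinates hVo hVc hf hg (hxV 0) hxV (hiso 0) hx hy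
  obtain ⟨s, hs⟩ :=
    exists_eq_zero_of_hasDerivAt_neg (fun t => (hcoord t).1) (fun t => (hcoord t).2)
  rw [← mul_exp_integral_eq hVo hVc hf hg (hxV 0) (hxV s) (hiso 0 s)] at hs
  exact ⟨s, (mul_eq_zero.1 hs).resolve_right (exp_ne_zero _)⟩

end Lienard

theorem linearization_of_lienard_general
    (J : Set ℝ)
    (f g : ℝ → ℝ)
    (hf : ∀ x ∈ J, AnalyticAt ℝ f x) (hg : ∀ x ∈ J, AnalyticAt ℝ g x)
    (hg0 : g 0 = 0)
    (hpos : ∀ x ∈ J, x ≠ 0 → x * g x > 0)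
    (hiso : ∀ x ∈ J, deriv g x + f x * g x = 1)
    (x y : ℝ → ℝ)
    (hmem : ∀ t : ℝ, x t ∈ J)
    (hx : ∀ t : ℝ, HasDerivAt x (y t) t)
    (hy : ∀ t : ℝ, HasDerivAt y (-(g (x t)) - f (x t) * (y t) ^ 2) t) :
    ∀ t : ℝ,
      HasDerivAt (fun t => ∫ s in (0:ℝ)..(x t), Real.exp (∫ u in (0:ℝ)..s, f u))
        (y t * Real.exp (∫ u in (0:ℝ)..(x t), f u)) t ∧
      HasDerivAt (fun t => y t * Real.exp (∫ u in (0:ℝ)..(x t), f u))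
        (-(∫ s in (0:ℝ)..(x t), Real.exp (∫ u in (0:ℝ)..s, f u))) t := by
  have hrange : IsPreconnected (range x) :=
    isPreconnected_range (continuous_iff_continuousAt.2 fun t => (hx t).continuousAt)
  obtain ⟨V, hVo, hVc, hxV, hVU⟩ :=
    exists_isOpen_ordConnected_of_isPreconnected hrange (range_nonempty x)
    ((isOpen_analyticAt ℝ f).inter (isOpen_analyticAt ℝ g))
    (range_subset_iff.2 fun t => ⟨hf _ (hmem t), hg _ (hmem t)⟩)
  have hfV : ContinuousOn f V := fun a ha => (hVU ha).1.continuousAt.continuousWithinAt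
  have hgV : ∀ a ∈ V, DifferentiableAt ℝ g a := fun a ha => (hVU ha).2.differentiableAt
  have hxV' : ∀ t, x t ∈ V := range_subset_iff.1 hxV
  have hiso' : ∀ t t', ∀ a ∈ uIcc (x t) (x t'), deriv g a + f a * g a = 1 := fun t t' a ha =>
    hiso a (range_subset_iff.2 hmem (hrange.ordConnected.uIcc_subset ⟨t, rfl⟩ ⟨t', rfl⟩ ha))
  obtain ⟨s, hs⟩ := Lienard.exists_apply_eq_zero hVo hVc hfV hgV hxV' hiso' hx hy
  have hxs : x s = 0 := by
    by_contra hne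
    simpa [hs] using hpos _ (hmem s) hne
  intro t
  simpa only [hxs, hg0, zero_add] using
    Lienard.hasDerivAt_coordinates hVo hVc hfV hgV (hxV' s) hxV' (hiso' s) hx hy t

/-- If `g' + f·g = 1` near 0, then the change of variables
`Q = ∫₀ˣ e^{F}`, `P = y e^{F(x)}` transforms the Liénard-type system
`ẋ = y, ẏ = −g(x) − f(x) y²` into the linear system `Q̇ = P, Ṗ = −Q`. -/
theorem linearization_of_lienard
    (J : Set ℝ) (hJ : J ∈ nhds (0 : ℝ))
    (f g : ℝ → ℝ)
    (hf : ∀ x ∈ J, AnalyticAt ℝ f x) (hg : ∀ x ∈ J, AnalyticAt ℝ g x)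
    (hg0 : g 0 = 0) (hg1 : deriv g 0 = 1)
    (hpos : ∀ x ∈ J, x ≠ 0 → x * g x > 0)
    (hiso : ∀ x ∈ J, deriv g x + f x * g x = 1)
    (x y : ℝ → ℝ)
    (hmem : ∀ t : ℝ, x t ∈ J)
    (hx : ∀ t : ℝ, HasDerivAt x (y t) t)
    (hy : ∀ t : ℝ, HasDerivAt y (-(g (x t)) - f (x t) * (y t) ^ 2) t) :
    ∀ t : ℝ,
      HasDerivAt (fun t => ∫ s in (0:ℝ)..(x t), Real.exp (∫ u in (0:ℝ)..s, f u))
        (y t * Real.exp (∫ u in (0:ℝ)..(x t), f u)) t ∧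
      HasDerivAt (fun t => y t * Real.exp (∫ u in (0:ℝ)..(x t), f u))
        (-(∫ s in (0:ℝ)..(x t), Real.exp (∫ u in (0:ℝ)..s, f u))) t :=
  linearization_of_lienard_general J f g hf hg hg0 hpos hiso x y hmem hx hy
end

section
/- Consider f(x) = −(7 + 10x + 5x²)/(1 + 3x + 3x² + x³) and g(x) = (1/2)(1 + 3x + 3x² + x³)·x·(2 + x), defined for x near 0 (where 1 + x ≠ 0). Then g'(x) + f(x)·g(x) = 1 for all such x. -/
/-! In the variable `u = 1 + x` one has `g = (u⁵ - u³)/2` and `f = -(5u² + 2)/u³`, so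
`g' = (5u⁴ - 3u²)/2` and `f·g = -(5u² + 2)(u² - 1)/2`, whose sum is `1`. -/

lemma one_add_three_mul_add_three_mul_sq_add_cube (x : ℝ) :
    1 + 3 * x + 3 * x ^ 2 + x ^ 3 = (1 + x) ^ 3 := by
  ring

lemma hasDerivAt_half_one_add_pow_three_mul_mul_two_add (x : ℝ) :
    HasDerivAt (fun x : ℝ => (1 / 2) * (1 + 3 * x + 3 * x ^ 2 + x ^ 3) * x * (2 + x))
      ((5 * (1 + x) ^ 4 - 3 * (1 + x) ^ 2) / 2) x := by
  have hg : (fun x : ℝ => (1 / 2) * (1 + 3 * x + 3 * x ^ 2 + x ^ 3) * x * (2 + x))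
      = fun x => ((1 + x) ^ 5 - (1 + x) ^ 3) / 2 := by
    funext x
    ring
  have hu : HasDerivAt (fun x : ℝ => 1 + x) 1 x := (hasDerivAt_id x).const_add 1
  rw [hg]
  refine (((hu.fun_pow 5).fun_sub (hu.fun_pow 3)).div_const 2).congr_deriv ?_
  norm_num

/-- For `f(x) = −(7+10x+5x²)/(1+3x+3x²+x³)` and
`g(x) = (1/2)(1+3x+3x²+x³)·x·(2+x)`, one has `g' + f·g = 1` for `1 + x ≠ 0`. -/
theorem quartic_zero_urabe (x : ℝ) (hx : 1 + x ≠ 0) :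
    deriv (fun x : ℝ => (1 / 2) * (1 + 3 * x + 3 * x ^ 2 + x ^ 3) * x * (2 + x)) x
      + (-(7 + 10 * x + 5 * x ^ 2) / (1 + 3 * x + 3 * x ^ 2 + x ^ 3))
          * ((1 / 2) * (1 + 3 * x + 3 * x ^ 2 + x ^ 3) * x * (2 + x)) = 1 := by
  rw [(hasDerivAt_half_one_add_pow_three_mul_mul_two_add x).deriv,
    one_add_three_mul_add_three_mul_sq_add_cube]
  field_simp
  ring
end

section
/- Let p₀, p₁, q₀, q₁, q₂ be real polynomials with p₀(0) = q₀(0) = 0 and p₁(0) ≠ 0. If the compatibility condition −p₁'(x)p₀(x)/p₁(x) + q₁(x) + p₀'(x) − 2q₂(x)p₀(x)/p₁(x) = 0 holds identically, then the change of variables z = p₀(x) + p₁(x)y transforms solutions of the system ẋ = p₀(x) + p₁(x)y, ẏ = q₀(x) + q₁(x)y + q₂(x)y² into solutions of the Liénard-type system ẋ = z, ż = −g(x) − f(x)z², where f(x) = −(q₂(x)/p₁(x) + p₁'(x)/p₁(x)) and g(x) = −q₂(x)p₀(x)²/p₁(x) + q₁(x)p₀(x) − p₁(x)q₀(x). -/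
open Polynomial

/-! Along a solution, `ż = p₀'(x) ẋ + p₁'(x) ẋ y + p₁(x) ẏ` with `ẋ = z`. Expanding in `y`, this
differs from `−g(x) − f(x) z²` by exactly `z` times the left-hand side of (RES): the `y²` terms agree
identically, and (RES) is what kills the remaining terms. -/

theorem hasDerivAt_eval_add_eval_mul (p₀ p₁ : ℝ[X]) {x y : ℝ → ℝ} {x' y' t : ℝ}
    (hx : HasDerivAt x x' t) (hy : HasDerivAt y y' t) :
    HasDerivAt (fun s => p₀.eval (x s) + p₁.eval (x s) * y s)
      (p₀.derivative.eval (x t) * x' + (p₁.derivative.eval (x t) * x' * y t + p₁.eval (x t) * y'))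
      t :=
  ((p₀.hasDerivAt (x t)).comp t hx).add (((p₁.hasDerivAt (x t)).comp t hx).mul hy)

theorem choudhuryGuha_rhs_eq {a₀ a₁ a₀' a₁' b₀ b₁ b₂ y : ℝ} (ha₁ : a₁ ≠ 0)
    (hres : -(a₁' * a₀) / a₁ + b₁ + a₀' - 2 * b₂ * a₀ / a₁ = 0) :
    a₀' * (a₀ + a₁ * y) + (a₁' * (a₀ + a₁ * y) * y + a₁ * (b₀ + b₁ * y + b₂ * y ^ 2)) =
      -(-b₂ * a₀ ^ 2 / a₁ + b₁ * a₀ - a₁ * b₀) - (-(b₂ / a₁ + a₁' / a₁)) * (a₀ + a₁ * y) ^ 2 := by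
  have hdiff : a₀' * (a₀ + a₁ * y) + (a₁' * (a₀ + a₁ * y) * y + a₁ * (b₀ + b₁ * y + b₂ * y ^ 2)) -
      (-(-b₂ * a₀ ^ 2 / a₁ + b₁ * a₀ - a₁ * b₀) - (-(b₂ / a₁ + a₁' / a₁)) * (a₀ + a₁ * y) ^ 2) =
      (a₀ + a₁ * y) * (-(a₁' * a₀) / a₁ + b₁ + a₀' - 2 * b₂ * a₀ / a₁) := by
    field_simp
    ring
  rw [hres, mul_zero, sub_eq_zero] at hdiff
  exact hdiff

theorem choudhury_guha_reduction_general
    (p₀ p₁ q₀ q₁ q₂ : Polynomial ℝ)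
    (hres : ∀ x : ℝ, p₁.eval x ≠ 0 →
      -((p₁.derivative.eval x) * p₀.eval x) / p₁.eval x + q₁.eval x
        + p₀.derivative.eval x - 2 * q₂.eval x * p₀.eval x / p₁.eval x = 0)
    (x y : ℝ → ℝ)
    (hdom : ∀ t : ℝ, p₁.eval (x t) ≠ 0)
    (hx : ∀ t : ℝ, HasDerivAt x (p₀.eval (x t) + p₁.eval (x t) * y t) t)
    (hy : ∀ t : ℝ, HasDerivAt y
      (q₀.eval (x t) + q₁.eval (x t) * y t + q₂.eval (x t) * (y t) ^ 2) t)
    (z : ℝ → ℝ) (hz : ∀ t : ℝ, z t = p₀.eval (x t) + p₁.eval (x t) * y t) :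
    ∀ t : ℝ,
      HasDerivAt x (z t) t ∧
      HasDerivAt z
        (-(-(q₂.eval (x t)) * (p₀.eval (x t)) ^ 2 / p₁.eval (x t)
            + q₁.eval (x t) * p₀.eval (x t) - p₁.eval (x t) * q₀.eval (x t))
          - (-(q₂.eval (x t) / p₁.eval (x t)
              + p₁.derivative.eval (x t) / p₁.eval (x t))) * (z t) ^ 2) t := by
  obtain rfl : z = fun s => p₀.eval (x s) + p₁.eval (x s) * y s := funext hz
  intro t
  refine ⟨hx t, ?_⟩
  rw [← choudhuryGuha_rhs_eq (hdom t) (hres _ (hdom t))]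
  exact hasDerivAt_eval_add_eval_mul p₀ p₁ (hx t) (hy t)

/-- Choudhury–Guha reduction: under the compatibility condition (RES), the change of
variables `z = p₀(x) + p₁(x) y` transforms solutions of
`ẋ = p₀(x) + p₁(x)y, ẏ = q₀(x) + q₁(x)y + q₂(x)y²` into solutions of the
Liénard-type system `ẋ = z, ż = −g(x) − f(x)z²`. -/
theorem choudhury_guha_reduction
    (p₀ p₁ q₀ q₁ q₂ : Polynomial ℝ)
    (hp₀ : p₀.eval 0 = 0) (hq₀ : q₀.eval 0 = 0) (hp₁ : p₁.eval 0 ≠ 0)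
    (hres : ∀ x : ℝ, p₁.eval x ≠ 0 →
      -((p₁.derivative.eval x) * p₀.eval x) / p₁.eval x + q₁.eval x
        + p₀.derivative.eval x - 2 * q₂.eval x * p₀.eval x / p₁.eval x = 0)
    (x y : ℝ → ℝ)
    (hdom : ∀ t : ℝ, p₁.eval (x t) ≠ 0)
    (hx : ∀ t : ℝ, HasDerivAt x (p₀.eval (x t) + p₁.eval (x t) * y t) t)
    (hy : ∀ t : ℝ, HasDerivAt y
      (q₀.eval (x t) + q₁.eval (x t) * y t + q₂.eval (x t) * (y t) ^ 2) t)
    (z : ℝ → ℝ) (hz : ∀ t : ℝ, z t = p₀.eval (x t) + p₁.eval (x t) * y t) :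
    ∀ t : ℝ,
      HasDerivAt x (z t) t ∧
      HasDerivAt z
        (-(-(q₂.eval (x t)) * (p₀.eval (x t)) ^ 2 / p₁.eval (x t)
            + q₁.eval (x t) * p₀.eval (x t) - p₁.eval (x t) * q₀.eval (x t))
          - (-(q₂.eval (x t) / p₁.eval (x t)
              + p₁.derivative.eval (x t) / p₁.eval (x t))) * (z t) ^ 2) t :=
  choudhury_guha_reduction_general p₀ p₁ q₀ q₁ q₂ hres x y hdom hx hy z hz
end

section
/- Let g be real analytic on a neighborhood J of 0 with g(x) = x + x²·g̃(x) for a real analytic g̃, and let F be real analytic with F(0) = 0. Define ξ(x) by ξ(x)² = 2∫₀ˣ g(s)e^{2F(s)} ds with x·ξ(x) > 0 for x ≠ 0. Then ξ is well defined and real analytic on a neighborhood of 0, with ξ(0) = 0 and ξ'(0) = 1. -/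
/-!
The integrand `f(s) = g(s) e^{2F(s)}` is analytic at `0` with `f(0) = 0` and `f'(0) = 1`. Integrating
its power series termwise gives an analytic `H(x) = ∫₀ˣ f` whose coefficients of degree `0` and `1`
vanish and whose coefficient of degree `2` is `f'(0)/2`. Dividing twice by `x` (iterated `dslope`)
writes `2H(x) = x² v(x)` with `v` analytic and `v(0) = f'(0) > 0`, so `ξ(x) = x √(v(x))` works,
`√` being analytic on `(0, ∞)`.
-/

open Filter Function FormalMultilinearSeries
open scoped ENNReal Topology

namespace FormalMultilinearSeries

variable {𝕜 : Type*} [RCLike 𝕜] (p : FormalMultilinearSeries 𝕜 𝕜 𝕜)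

noncomputable def primitive : FormalMultilinearSeries 𝕜 𝕜 𝕜 :=
  ofScalars 𝕜 fun
    | 0 => 0
    | n + 1 => p.coeff n / (n + 1)

@[simp]
lemma coeff_primitive_zero : p.primitive.coeff 0 = 0 := coeff_ofScalars

@[simp]
lemma coeff_primitive_succ (n : ℕ) : p.primitive.coeff (n + 1) = p.coeff n / (n + 1) :=
  coeff_ofScalars

lemma radius_le_radius_primitive : p.radius ≤ p.primitive.radius := by
  refine ENNReal.le_of_forall_nnreal_lt fun t ht ↦ p.primitive.le_radius_of_summable_norm ?_
  rw [← summable_nat_add_iff 1]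
  refine .of_nonneg_of_le (fun n ↦ by positivity) (fun n ↦ ?_)
    ((p.summable_norm_mul_pow ht).mul_right (t : ℝ))
  have h1 : (1 : ℝ) ≤ ‖(n : 𝕜) + 1‖ := by
    rw [← Nat.cast_succ, RCLike.norm_natCast]
    exact_mod_cast n.succ_pos
  rw [norm_apply_eq_norm_coef, norm_apply_eq_norm_coef, coeff_primitive_succ, norm_div, pow_succ,
    ← mul_assoc]
  gcongr
  exact div_le_self (norm_nonneg _) h1

@[simp]
lemma derivSeries_primitive_coeff_one (n : ℕ) : p.primitive.derivSeries.coeff n 1 = p.coeff n := by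
  rw [derivSeries_coeff_one, coeff_primitive_succ, nsmul_eq_mul, Nat.cast_succ,
    mul_div_cancel₀ _ (Nat.cast_add_one_ne_zero n)]

end FormalMultilinearSeries

namespace HasFPowerSeriesOnBall

variable {𝕜 : Type*} [RCLike 𝕜] {f : 𝕜 → 𝕜} {p : FormalMultilinearSeries 𝕜 𝕜 𝕜} {x : 𝕜}
  {r : ℝ≥0∞}

theorem sum_primitive (hf : HasFPowerSeriesOnBall f p x r) :
    HasFPowerSeriesOnBall p.primitive.sum p.primitive 0 r :=
  have hr := hf.r_le.trans p.radius_le_radius_primitive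
  (p.primitive.hasFPowerSeriesOnBall (hf.r_pos.trans_le hr)).mono hf.r_pos hr

theorem hasDerivAt_sum_primitive (hf : HasFPowerSeriesOnBall f p 0 r) {y : 𝕜}
    (hy : y ∈ Metric.eball 0 r) : HasDerivAt p.primitive.sum (f y) y := by
  have hH := hf.sum_primitive
  have hderiv : HasSum (fun n ↦ y ^ n • p.coeff n) (deriv p.primitive.sum y) := by
    simpa only [zero_add, apply_eq_pow_smul_coeff, ContinuousLinearMap.apply_apply,
      _root_.smul_apply, derivSeries_primitive_coeff_one, fderiv_apply_one_eq_deriv]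
      using (hH.fderiv.hasSum hy).mapL (ContinuousLinearMap.apply 𝕜 𝕜 1)
  have hfy : HasSum (fun n ↦ y ^ n • p.coeff n) (f y) := by
    simpa [apply_eq_pow_smul_coeff] using hf.hasSum hy
  rw [← hderiv.unique hfy]
  exact (hH.analyticAt_of_mem hy).differentiableAt.hasDerivAt

end HasFPowerSeriesOnBall

theorem HasFPowerSeriesOnBall.integral_eq_sum_primitive {f : ℝ → ℝ}
    {p : FormalMultilinearSeries ℝ ℝ ℝ} {r : ℝ≥0∞} (hf : HasFPowerSeriesOnBall f p 0 r) {x : ℝ}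
    (hx : x ∈ Metric.eball 0 r) : ∫ s in 0..x, f s = p.primitive.sum x := by
  have hH0 : p.primitive.sum 0 = 0 :=
    (hf.sum_primitive.coeff_zero 1).symm.trans p.coeff_primitive_zero
  have hsub : Set.uIcc 0 x ⊆ Metric.eball 0 r :=
    (convex_eball 0 r).ordConnected.uIcc_subset (Metric.mem_eball_self hf.r_pos) hx
  rw [intervalIntegral.integral_eq_sub_of_hasDerivAt
    (fun y hy ↦ hf.hasDerivAt_sum_primitive (hsub hy)) (hf.continuousOn.mono hsub).intervalIntegrable,
    hH0, sub_zero]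

theorem HasFPowerSeriesAt.exists_eq_pow_smul {𝕜 E : Type*} [NontriviallyNormedField 𝕜]
    [NormedAddCommGroup E] [NormedSpace 𝕜 E] {f : 𝕜 → E} {p : FormalMultilinearSeries 𝕜 𝕜 E}
    {z₀ : 𝕜} (hp : HasFPowerSeriesAt f p z₀) {n : ℕ} (h : ∀ k < n, p.coeff k = 0) :
    ∃ u : 𝕜 → E, AnalyticAt 𝕜 u z₀ ∧ u z₀ = p.coeff n ∧ ∀ z, f z = (z - z₀) ^ n • u z := by
  have hval (k : ℕ) : (swap dslope z₀)^[k] f z₀ = p.coeff k := by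
    rw [← (hp.has_fpower_series_iterate_dslope_fslope k).coeff_zero 1, ← coeff,
      coeff_iterate_fslope, zero_add]
  exact ⟨_, (hp.has_fpower_series_iterate_dslope_fslope n).analyticAt, hval n,
    fun z ↦ (pow_sub_smul_iterate_dslope_of_zero n (fun k hk ↦ (hval k).trans (h k hk)) z).symm⟩

theorem AnalyticAt.sqrt {f : ℝ → ℝ} {x : ℝ} (hf : AnalyticAt ℝ f x) (hx : 0 < f x) :
    AnalyticAt ℝ (fun y ↦ √(f y)) x := by
  have h : AnalyticAt ℝ (fun y ↦ Real.exp (Real.log (f y) * (1 / 2))) x :=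
    ((hf.log hx).mul analyticAt_const).rexp
  refine h.congr ?_
  filter_upwards [hf.continuousAt.eventually (lt_mem_nhds hx)] with y hy
  rw [Real.sqrt_eq_rpow, Real.rpow_def_of_pos hy]

theorem HasFPowerSeriesAt.exists_signed_sqrt {Φ : ℝ → ℝ} {q : FormalMultilinearSeries ℝ ℝ ℝ}
    (hΦ : HasFPowerSeriesAt Φ q 0) (h0 : q.coeff 0 = 0) (h1 : q.coeff 1 = 0)
    (h2 : 0 < q.coeff 2) :
    ∃ ξ : ℝ → ℝ, ξ 0 = 0 ∧ deriv ξ 0 = √(q.coeff 2) ∧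
      ∀ᶠ x in 𝓝 0, AnalyticAt ℝ ξ x ∧ ξ x ^ 2 = Φ x ∧ (x ≠ 0 → 0 < x * ξ x) := by
  obtain ⟨u, hu, hu0, hΦu⟩ := hΦ.exists_eq_pow_smul (n := 2) fun k hk ↦ by
    interval_cases k <;> assumption
  rw [← hu0] at h2 ⊢
  refine ⟨fun x ↦ x * √(u x), by simp, ?_, ?_⟩
  · have := (hasDerivAt_id' 0).fun_mul (hu.sqrt h2).differentiableAt.hasDerivAt
    simpa using this.deriv
  · filter_upwards [hu.eventually_analyticAt, hu.continuousAt.eventually (lt_mem_nhds h2)]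
      with x hux hx
    refine ⟨analyticAt_id.mul (hux.sqrt hx), ?_, fun hx0 ↦ ?_⟩
    · rw [mul_pow, Real.sq_sqrt hx.le, hΦu, sub_zero, smul_eq_mul]
    · calc 0 < x ^ 2 * √(u x) := by positivity
        _ = x * (x * √(u x)) := by ring

theorem AnalyticAt.exists_signed_sqrt_two_mul_integral {f : ℝ → ℝ} (hf : AnalyticAt ℝ f 0)
    (hf0 : f 0 = 0) (hf' : 0 < deriv f 0) :
    ∃ ξ : ℝ → ℝ, ξ 0 = 0 ∧ deriv ξ 0 = √(deriv f 0) ∧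
      ∀ᶠ x in 𝓝 0, AnalyticAt ℝ ξ x ∧ ξ x ^ 2 = 2 * ∫ s in 0..x, f s ∧ (x ≠ 0 → 0 < x * ξ x) := by
  obtain ⟨p, r, hp⟩ := hf
  have hΦ : HasFPowerSeriesAt (fun x ↦ 2 * ∫ s in 0..x, f s) ((2 : ℝ) • p.primitive) 0 := by
    refine (hp.sum_primitive.hasFPowerSeriesAt.const_smul (c := (2 : ℝ))).congr ?_
    filter_upwards [Metric.eball_mem_nhds 0 hp.r_pos] with x hx
    rw [hp.integral_eq_sum_primitive hx]
    rfl
  have hΦc (n : ℕ) : ((2 : ℝ) • p.primitive).coeff n = 2 * p.primitive.coeff n := rfl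
  have hc0 : p.coeff 0 = 0 := (hp.coeff_zero 1).trans hf0
  have hc1 : ((2 : ℝ) • p.primitive).coeff 1 = 0 := by
    rw [hΦc, coeff_primitive_succ, hc0]
    simp
  have hc2 : ((2 : ℝ) • p.primitive).coeff 2 = deriv f 0 := by
    have hp1 : p.coeff 1 = deriv f 0 := hp.hasFPowerSeriesAt.deriv.symm
    rw [hΦc, coeff_primitive_succ, hp1]
    push_cast
    ring
  simpa only [hc2] using hΦ.exists_signed_sqrt (by simp [hΦc]) hc1 (hc2 ▸ hf')

/-- Construction of the variable `ξ`: if `g(x) = x + x² g̃(x)` with `g̃` analytic and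
`F` is analytic with `F(0) = 0`, then there is a real analytic function `ξ` near `0`
with `ξ(0) = 0`, `ξ'(0) = 1`, `ξ(x)² = 2∫₀ˣ g(s)e^{2F(s)} ds` and `x·ξ(x) > 0`
for `x ≠ 0`. -/
theorem xi_well_defined
    (J : Set ℝ) (hJ : J ∈ nhds (0 : ℝ))
    (g gt F : ℝ → ℝ)
    (hgt : ∀ x ∈ J, AnalyticAt ℝ gt x)
    (hg : ∀ x ∈ J, g x = x + x ^ 2 * gt x)
    (hF : ∀ x ∈ J, AnalyticAt ℝ F x) (hF0 : F 0 = 0) :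
    ∃ ε > (0 : ℝ), ∃ ξ : ℝ → ℝ,
      (∀ x : ℝ, |x| < ε → AnalyticAt ℝ ξ x) ∧
      ξ 0 = 0 ∧ deriv ξ 0 = 1 ∧
      (∀ x : ℝ, |x| < ε →
        (ξ x) ^ 2 = 2 * ∫ s in (0:ℝ)..x, g s * Real.exp (2 * F s)) ∧
      (∀ x : ℝ, |x| < ε → x ≠ 0 → x * ξ x > 0) := by
  have h0J : (0 : ℝ) ∈ J := mem_of_mem_nhds hJ
  have hg_eq : g =ᶠ[𝓝 0] fun x ↦ x + x ^ 2 * gt x := eventually_of_mem hJ hg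
  have hg0 : g 0 = 0 := by simpa using hg_eq.eq_of_nhds
  have hg' : HasDerivAt g 1 0 := by
    simpa using ((hasDerivAt_id' 0).add ((hasDerivAt_pow 2 0).fun_mul
      (hgt 0 h0J).differentiableAt.hasDerivAt)).congr_of_eventuallyEq hg_eq
  set f : ℝ → ℝ := fun s ↦ g s * Real.exp (2 * F s)
  have hf : AnalyticAt ℝ f 0 :=
    ((analyticAt_id.add ((analyticAt_id.pow 2).mul (hgt 0 h0J))).congr hg_eq.symm).mul
      (analyticAt_const.mul (hF 0 h0J)).rexp
  have hf' : deriv f 0 = 1 := by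
    simpa [hF0, hg0] using
      (hg'.fun_mul ((hF 0 h0J).differentiableAt.hasDerivAt.const_mul 2).exp).deriv
  obtain ⟨ξ, hξ0, hξ', hξ⟩ :=
    hf.exists_signed_sqrt_two_mul_integral (by simp [f, hg0]) (hf' ▸ one_pos)
  obtain ⟨ε, hε, hξε⟩ := Metric.eventually_nhds_iff.mp hξ
  have hξε' (x : ℝ) (hx : |x| < ε) := hξε (y := x) (by simpa using hx)
  exact ⟨ε, hε, ξ, fun x hx ↦ (hξε' x hx).1, hξ0, by rw [hξ', hf', Real.sqrt_one],
    fun x hx ↦ (hξε' x hx).2.1, fun x hx hx0 ↦ (hξε' x hx).2.2 hx0⟩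
end
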